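/- Existence of a γ-lower barrier for rings: There exists γ > 0, depending only on λ and Λ, such that for every y ∈ ℝ² and every r > 0 there exists a function Φ ∈ C²(R(y,r,3r)) ∩ C(closure R(y,r,3r)), where R(y,r,3r) = G̃(y,3r) \ closure(G̃(y,r)), satisfying: LΦ ≥ 0 on R(y,r,3r) for every choice of coefficients a11, a12, a22 satisfying the uniform ellipticity condition with constants λ, Λ; Φ ≤ 0 on ∂G̃(y,3r); Φ ≤ 1 on ∂G̃(y,r); Φ ≥ γ on ∂G̃(y,2r); and Φ is an even function of the variable x1 (Φ(x1,x2) = Φ(−x1,x2)). -/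

import Mathlib

open MeasureTheory Real Set

noncomputable section

/-- First partial derivative in the `x₁` direction. -/
def d1 (u : ℝ × ℝ → ℝ) (x : ℝ × ℝ) : ℝ := fderiv ℝ u x (1, 0)

/-- First partial derivative in the `x₂` direction. -/
def d2 (u : ℝ × ℝ → ℝ) (x : ℝ × ℝ) : ℝ := fderiv ℝ u x (0, 1)

/-- The Grushin-type operator
`Lu = a₁₁ ∂₁₁ u + 2 a₁₂ x₁ ∂₁₂ u + a₂₂ x₁² ∂₂₂ u`. -/
def Lop (a11 a12 a22 : ℝ × ℝ → ℝ) (u : ℝ × ℝ → ℝ) (x : ℝ × ℝ) : ℝ :=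
  a11 x * d1 (d1 u) x + 2 * a12 x * x.1 * d2 (d1 u) x + a22 x * x.1 ^ 2 * d2 (d2 u) x

/-- Uniform ellipticity with constants `lam ≤ Lam`. -/
def IsElliptic (lam Lam : ℝ) (a11 a12 a22 : ℝ × ℝ → ℝ) : Prop :=
  ∀ x ξ : ℝ × ℝ,
    lam * (ξ.1 ^ 2 + ξ.2 ^ 2) ≤ a11 x * ξ.1 ^ 2 + 2 * a12 x * ξ.1 * ξ.2 + a22 x * ξ.2 ^ 2 ∧
      a11 x * ξ.1 ^ 2 + 2 * a12 x * ξ.1 * ξ.2 + a22 x * ξ.2 ^ 2 ≤ Lam * (ξ.1 ^ 2 + ξ.2 ^ 2)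

/-- The quasi distance `d̃`. -/
def qdist (x y : ℝ × ℝ) : ℝ :=
  |x.1 - y.1| + Real.sqrt (x.1 ^ 2 + y.1 ^ 2 + 4 * |x.2 - y.2|) - Real.sqrt (x.1 ^ 2 + y.1 ^ 2)

/-- Quasi metric ball for `d̃`. -/
def Bq (y : ℝ × ℝ) (r : ℝ) : Set (ℝ × ℝ) := {x | qdist x y < r}

/-- The boxes of Franchi–Lanconelli. -/
def Box (y : ℝ × ℝ) (r : ℝ) : Set (ℝ × ℝ) :=
  {x | |x.1 - y.1| < r ∧ |x.2 - y.2| < r * (|y.1| + r)}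

/-- The gauge `ρ(x,y) = ((x₁²−y₁²)² + 4(x₂−y₂)²)^{1/4}`. -/
def grho (x y : ℝ × ℝ) : ℝ :=
  ((x.1 ^ 2 - y.1 ^ 2) ^ 2 + 4 * (x.2 - y.2) ^ 2) ^ ((1 : ℝ) / 4)

/-- Sublevel set `G(y,r) = {x : g_r(x,y) < r}` of the gauge function `g_r`. -/
def Gset (y : ℝ × ℝ) (r : ℝ) : Set (ℝ × ℝ) :=
  {x | (|y.1| < r ∧ grho x y < r) ∨
    (r ≤ |y.1| ∧ 0 ≤ x.1 * y.1 ∧ grho x y ^ 2 / |y.1| < r)}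

/-- Sublevel set `G̃(y,r) = {x : g̃_r(x,y) < r}` of the gauge function `g̃_r`. -/
def Gtil (y : ℝ × ℝ) (r : ℝ) : Set (ℝ × ℝ) :=
  {x | (|y.1| < r ∧ grho x y < r) ∨ (r ≤ |y.1| ∧ grho x y ^ 2 / |y.1| < r)}

/-- Reflection with respect to the `x₂` axis. -/
def Sref (x : ℝ × ℝ) : ℝ × ℝ := (-x.1, x.2)

/-- Symmetrized quasi metric ball `B̃(y,r) = B(y,r) ∪ B(S(y),r)`. -/
def Btil (y : ℝ × ℝ) (r : ℝ) : Set (ℝ × ℝ) := Bq y r ∪ Bq (Sref y) r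

/-- The Euclidean diameter of a subset of `ℝ × ℝ`. -/
def euclDiam (s : Set (ℝ × ℝ)) : ℝ :=
  sSup {d | ∃ x ∈ s, ∃ y ∈ s, d = Real.sqrt ((x.1 - y.1) ^ 2 + (x.2 - y.2) ^ 2)}

/-- The Euclidean ball of center `z` and radius `r` in `ℝ × ℝ`. -/
def euclBall (z : ℝ × ℝ) (r : ℝ) : Set (ℝ × ℝ) :=
  {x | Real.sqrt ((x.1 - z.1) ^ 2 + (x.2 - z.2) ^ 2) < r}

/-- The convex envelope of `w` on a set `E`: the sup of all affine functions
lying below `w` on `E`. -/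
def convEnv (w : ℝ × ℝ → ℝ) (E : Set (ℝ × ℝ)) (x : ℝ × ℝ) : ℝ :=
  sSup {t | ∃ p : ℝ × ℝ, ∃ c : ℝ,
    (∀ z ∈ E, p.1 * z.1 + p.2 * z.2 + c ≤ w z) ∧ t = p.1 * x.1 + p.2 * x.2 + c}

/-! With `s = ρ⁴ = (x₁² - y₁²)² + 4 (x₂ - y₂)²`, every `G̃(y,R)` is a sublevel set `{s < S_R}`,
so the ring is `{S_r ≤ s < S_{3r}}`. For `F` of class `C²`,
`L(F ∘ s) = F''(s) a(Xs, Xs) + F'(s) Ls` with `Xs = (∂₁s, x₁ ∂₂s)`, and here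
`a(Xs, Xs) ≥ 16 λ x₁² s`, `Ls ≤ 20 Λ x₁²`; hence `s ^ q` is a subsolution as soon as
`4 λ q + 5 Λ ≤ 4 λ`. The barrier is `s ^ q` normalized to vanish on `{s = S_{3r}}` and equal `1`
on `{s = S_r}`. Since `9 S_{2r} ≤ 4 S_{3r}` and `S_{3r} ≤ 81 S_r` for all `y` and `r`, its value on
`{s = S_{2r}}` is at least `((4/9)^q - 1) / ((1/81)^q - 1)`. -/

open Filter Topology

section SecondOrderChainRule

variable {E : Type*} [NormedAddCommGroup E] [NormedSpace ℝ E]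

theorem fderiv_fderiv_comp_apply {u : E → ℝ} {F F' : ℝ → ℝ} {F'' : ℝ} {x : E} (v w : E)
    (hu : ContDiff ℝ 2 u) (hF : ∀ᶠ t in 𝓝 (u x), HasDerivAt F (F' t) t)
    (hF' : HasDerivAt F' F'' (u x)) :
    fderiv ℝ (fun z => fderiv ℝ (fun z => F (u z)) z v) x w =
        F'' * fderiv ℝ u x w * fderiv ℝ u x v +
        F' (u x) * fderiv ℝ (fun z => fderiv ℝ u z v) x w := by
  have hdu : Differentiable ℝ u := hu.differentiable (by norm_num)
  have hdv : Differentiable ℝ (fun z => fderiv ℝ u z v) :=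
    ((hu.fderiv_right (m := 1) (by norm_num)).clm_apply contDiff_const).differentiable
      (by norm_num)
  have hev : (fun z => fderiv ℝ (fun z => F (u z)) z v) =ᶠ[𝓝 x]
      fun z => F' (u z) * fderiv ℝ u z v := by
    filter_upwards [hu.continuous.continuousAt.eventually hF] with z hz
    have hcomp : HasFDerivAt (fun z => F (u z)) (F' (u z) • fderiv ℝ u z) z :=
      hz.comp_hasFDerivAt z (hdu z).hasFDerivAt
    rw [hcomp.fderiv]
    rfl
  have hF'u : HasFDerivAt (fun z => F' (u z)) (F'' • fderiv ℝ u x) x :=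
    hF'.comp_hasFDerivAt x (hdu x).hasFDerivAt
  have hprod : HasFDerivAt (fun z => F' (u z) * fderiv ℝ u z v) _ x :=
    hF'u.mul (hdv x).hasFDerivAt
  rw [hev.fderiv_eq, hprod.fderiv]
  simp only [add_apply, smul_apply, smul_eq_mul]
  ring

end SecondOrderChainRule

def coeffForm (a11 a12 a22 : ℝ × ℝ → ℝ) (x ξ : ℝ × ℝ) : ℝ :=
  a11 x * ξ.1 ^ 2 + 2 * a12 x * ξ.1 * ξ.2 + a22 x * ξ.2 ^ 2

theorem Lop_comp {a11 a12 a22 u : ℝ × ℝ → ℝ} {F F' : ℝ → ℝ} {F'' : ℝ} {x : ℝ × ℝ}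
    (hu : ContDiff ℝ 2 u) (hF : ∀ᶠ t in 𝓝 (u x), HasDerivAt F (F' t) t)
    (hF' : HasDerivAt F' F'' (u x)) :
    Lop a11 a12 a22 (fun z => F (u z)) x =
      F'' * coeffForm a11 a12 a22 x (d1 u x, x.1 * d2 u x) + F' (u x) * Lop a11 a12 a22 u x := by
  unfold Lop d1 d2
  simp only [fderiv_fderiv_comp_apply _ _ hu hF hF', coeffForm]
  ring

theorem hasFDerivAt_add_fst_snd {f g : ℝ → ℝ} {f' g' : ℝ} {x : ℝ × ℝ}
    (hf : HasDerivAt f f' x.1) (hg : HasDerivAt g g' x.2) :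
    HasFDerivAt (fun z : ℝ × ℝ => f z.1 + g z.2)
      (f' • ContinuousLinearMap.fst ℝ ℝ ℝ + g' • ContinuousLinearMap.snd ℝ ℝ ℝ) x :=
  (hf.comp_hasFDerivAt x hasFDerivAt_fst).add (hg.comp_hasFDerivAt x hasFDerivAt_snd)

def rho4 (y x : ℝ × ℝ) : ℝ := (x.1 ^ 2 - y.1 ^ 2) ^ 2 + 4 * (x.2 - y.2) ^ 2

section Rho4

variable {y x : ℝ × ℝ}

theorem grho_pow_four : grho x y ^ 4 = rho4 y x := by
  have h := Real.rpow_inv_natCast_pow (x := rho4 y x) (n := 4) (by unfold rho4; positivity)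
    (by norm_num)
  simpa [grho, rho4] using h

theorem rho4_neg_fst : rho4 y (-x.1, x.2) = rho4 y x := by
  simp [rho4]

theorem contDiff_rho4 : ContDiff ℝ 2 (rho4 y) := by
  unfold rho4; fun_prop

theorem hasFDerivAt_rho4 :
    HasFDerivAt (rho4 y) ((4 * x.1 * (x.1 ^ 2 - y.1 ^ 2)) • ContinuousLinearMap.fst ℝ ℝ ℝ
      + (8 * (x.2 - y.2)) • ContinuousLinearMap.snd ℝ ℝ ℝ) x :=
  hasFDerivAt_add_fst_snd (f := fun t => (t ^ 2 - y.1 ^ 2) ^ 2) (g := fun t => 4 * (t - y.2) ^ 2)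
    ((((hasDerivAt_pow 2 x.1).sub_const _).fun_pow 2).congr_deriv (by norm_num; ring))
    (((((hasDerivAt_id' x.2).sub_const _).fun_pow 2).const_mul 4).congr_deriv
      (by norm_num; ring))

theorem d1_rho4 : d1 (rho4 y) = fun x => 4 * x.1 * (x.1 ^ 2 - y.1 ^ 2) := by
  funext x
  simp [d1, hasFDerivAt_rho4.fderiv]

theorem d2_rho4 : d2 (rho4 y) = fun x => 8 * (x.2 - y.2) := by
  funext x
  simp [d2, hasFDerivAt_rho4.fderiv]

theorem Lop_rho4 {a11 a12 a22 : ℝ × ℝ → ℝ} :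
    Lop a11 a12 a22 (rho4 y) x = a11 x * (12 * x.1 ^ 2 - 4 * y.1 ^ 2) + 8 * a22 x * x.1 ^ 2 := by
  have h1 : HasFDerivAt (d1 (rho4 y))
      ((12 * x.1 ^ 2 - 4 * y.1 ^ 2) • ContinuousLinearMap.fst ℝ ℝ ℝ) x := by
    rw [d1_rho4]
    exact ((((hasDerivAt_id' x.1).const_mul 4).mul
      ((hasDerivAt_pow 2 x.1).sub_const _)).congr_deriv (by norm_num; ring)).comp_hasFDerivAt
        x hasFDerivAt_fst
  have h2 : HasFDerivAt (d2 (rho4 y)) ((8 : ℝ) • ContinuousLinearMap.snd ℝ ℝ ℝ) x := by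
    rw [d2_rho4]
    exact ((((hasDerivAt_id' x.2).sub_const _).const_mul 8).congr_deriv
      (by norm_num)).comp_hasFDerivAt x hasFDerivAt_snd
  simp only [Lop, d1, d2, h1.fderiv, h2.fderiv, smul_apply, ContinuousLinearMap.coe_fst',
    ContinuousLinearMap.coe_snd', smul_eq_mul]
  ring

end Rho4

namespace IsElliptic

variable {lam Lam : ℝ} {a11 a12 a22 : ℝ × ℝ → ℝ}

theorem le_coeffForm (h : IsElliptic lam Lam a11 a12 a22) (x ξ : ℝ × ℝ) :
    lam * (ξ.1 ^ 2 + ξ.2 ^ 2) ≤ coeffForm a11 a12 a22 x ξ :=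
  (h x ξ).1

theorem le_a11 (h : IsElliptic lam Lam a11 a12 a22) (x : ℝ × ℝ) : lam ≤ a11 x := by
  simpa using (h x (1, 0)).1

theorem a11_le (h : IsElliptic lam Lam a11 a12 a22) (x : ℝ × ℝ) : a11 x ≤ Lam := by
  simpa using (h x (1, 0)).2

theorem a22_le (h : IsElliptic lam Lam a11 a12 a22) (x : ℝ × ℝ) : a22 x ≤ Lam := by
  simpa using (h x (0, 1)).2

end IsElliptic

theorem Lop_rpow_rho4_nonneg {lam Lam q C D : ℝ} {a11 a12 a22 : ℝ × ℝ → ℝ} {y x : ℝ × ℝ}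
    (hell : IsElliptic lam Lam a11 a12 a22) (hlam : 0 < lam) (hLam : lam ≤ Lam)
    (hq : 4 * lam * q + 5 * Lam ≤ 4 * lam) (hD : 0 < D) (hx : 0 < rho4 y x) :
    0 ≤ Lop a11 a12 a22 (fun z => (rho4 y z ^ q - C) / D) x := by
  set t := rho4 y x
  have hq0 : q < 0 := by nlinarith
  have hF : ∀ᶠ s in 𝓝 t, HasDerivAt (fun s => (s ^ q - C) / D) (q * s ^ (q - 1) / D) s :=
    (lt_mem_nhds hx).mono fun s hs =>
      ((Real.hasDerivAt_rpow_const (Or.inl hs.ne')).sub_const C).div_const D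
  have hF' :
      HasDerivAt (fun s => q * s ^ (q - 1) / D) (q * ((q - 1) * t ^ (q - 1 - 1)) / D) t :=
    ((Real.hasDerivAt_rpow_const (Or.inl hx.ne')).const_mul q).div_const D
  rw [Lop_comp contDiff_rho4 hF hF', Lop_rho4]
  simp only [d1_rho4, d2_rho4]
  set Q := coeffForm a11 a12 a22 x (4 * x.1 * (x.1 ^ 2 - y.1 ^ 2), x.1 * (8 * (x.2 - y.2)))
  set T := a11 x * (12 * x.1 ^ 2 - 4 * y.1 ^ 2) + 8 * a22 x * x.1 ^ 2
  have hQ : 16 * lam * x.1 ^ 2 * t ≤ Q := by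
    convert hell.le_coeffForm x _ using 1
    simp only [t, rho4]
    ring
  have hT : T ≤ 20 * Lam * x.1 ^ 2 := by
    nlinarith [hell.le_a11 x, hell.a11_le x, hell.a22_le x, sq_nonneg x.1, sq_nonneg y.1,
      mul_nonneg (hlam.le.trans (hell.le_a11 x)) (sq_nonneg y.1)]
  have hneg : (q - 1) * Q + t * T ≤ 0 := by
    nlinarith [mul_nonneg (sq_nonneg x.1) hx.le]
  have hsplit : q * ((q - 1) * t ^ (q - 1 - 1)) / D * Q + q * t ^ (q - 1) / D * T
      = q * t ^ (q - 1 - 1) / D * ((q - 1) * Q + t * T) := by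
    rw [Real.rpow_sub_one hx.ne' (q - 1)]
    field_simp
  rw [hsplit]
  exact mul_nonneg_of_nonpos_of_nonpos
    (div_nonpos_of_nonpos_of_nonneg (mul_nonpos_of_nonpos_of_nonneg hq0.le (by positivity)) hD.le)
    hneg

def gtilLevel (t R : ℝ) : ℝ := if t < R then R ^ 4 else (R * t) ^ 2

theorem Gtil_eq_rho4_lt {y : ℝ × ℝ} {R : ℝ} (hR : 0 < R) :
    Gtil y R = {x | rho4 y x < gtilLevel |y.1| R} := by
  ext x
  have hρ : 0 ≤ grho x y := by unfold grho; positivity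
  simp only [Gtil, gtilLevel, Set.mem_ofPred_eq, ← grho_pow_four]
  split_ifs with h
  · rw [pow_lt_pow_iff_left₀ hρ hR.le (by norm_num)]
    constructor
    · rintro (⟨-, hlt⟩ | ⟨hle, -⟩)
      exacts [hlt, absurd h hle.not_gt]
    · exact fun hlt => Or.inl ⟨h, hlt⟩
  · have hy : 0 < |y.1| := hR.trans_le (not_lt.1 h)
    rw [div_lt_iff₀ hy, show grho x y ^ 4 = (grho x y ^ 2) ^ 2 by ring,
      pow_lt_pow_iff_left₀ (by positivity) (by positivity) (by norm_num)]
    constructor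
    · rintro (⟨hlt, -⟩ | ⟨-, hlt⟩)
      exacts [absurd hlt h, hlt]
    · exact fun hlt => Or.inr ⟨not_lt.1 h, hlt⟩

theorem frontier_Gtil_subset {y : ℝ × ℝ} {R : ℝ} (hR : 0 < R) :
    frontier (Gtil y R) ⊆ {x | rho4 y x = gtilLevel |y.1| R} := by
  rw [Gtil_eq_rho4_lt hR]
  intro x hx
  have := contDiff_rho4.continuous.frontier_preimage_subset (Set.Iio (gtilLevel |y.1| R)) hx
  rwa [frontier_Iio] at this

theorem closure_Gtil_diff_subset {y : ℝ × ℝ} {R R' : ℝ} (hR : 0 < R) :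
    closure (Gtil y R' \ closure (Gtil y R)) ⊆ {x | gtilLevel |y.1| R ≤ rho4 y x} := by
  refine closure_minimal (fun x hx => ?_) (isClosed_le continuous_const contDiff_rho4.continuous)
  have hx' : x ∉ Gtil y R := fun h => hx.2 (subset_closure h)
  rw [Gtil_eq_rho4_lt hR] at hx'
  simpa using hx'

section gtilLevel

variable {t r : ℝ}

theorem gtilLevel_pos (hr : 0 < r) : 0 < gtilLevel t r := by
  unfold gtilLevel
  split_ifs with h
  · positivity
  · have : 0 < t := hr.trans_le (not_lt.1 h)
    positivity

theorem gtilLevel_lt_three_mul (hr : 0 < r) : gtilLevel t r < gtilLevel t (3 * r) := by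
  unfold gtilLevel; split_ifs with h1 h2 h2
  · nlinarith [pow_pos hr 4]
  · linarith
  · nlinarith [mul_pos hr hr, mul_pos (sub_pos.mpr h2) (by linarith : (0:ℝ) < 3 * r + t)]
  · push Not at h1
    nlinarith [mul_pos hr (lt_of_lt_of_le hr h1)]

theorem gtilLevel_two_mul_le (hr : 0 < r) :
    9 * gtilLevel t (2 * r) ≤ 4 * gtilLevel t (3 * r) := by
  unfold gtilLevel; split_ifs with h1 h2 h2
  · nlinarith [pow_pos hr 4]
  · linarith
  · push Not at h1
    nlinarith [mul_pos hr hr, mul_pos (sub_pos.mpr h2) (by linarith : (0:ℝ) < 3 * r + t)]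
  · push Not at h1 h2
    nlinarith [mul_pos hr (lt_of_lt_of_le hr (by linarith : r ≤ t))]

theorem gtilLevel_three_mul_le (hr : 0 < r) : gtilLevel t (3 * r) ≤ 81 * gtilLevel t r := by
  unfold gtilLevel; split_ifs with h1 h2 h2
  · nlinarith [pow_pos hr 4]
  · push Not at h2
    nlinarith [mul_pos hr hr, mul_self_le_mul_self hr.le h2]
  · linarith
  · push Not at h1 h2
    nlinarith [mul_pos hr (lt_of_lt_of_le hr h2)]

end gtilLevel

theorem barrierConst_le {q S₁ S₂ S₃ : ℝ} (hq : q < 0) (h₂ : 0 < S₂) (h₂₃ : 9 * S₂ ≤ 4 * S₃)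
    (h₃₁ : S₃ ≤ 81 * S₁) (h₁₃ : S₁ < S₃) :
    ((4 / 9) ^ q - 1) / ((1 / 81) ^ q - 1) ≤ (S₂ ^ q - S₃ ^ q) / (S₁ ^ q - S₃ ^ q) := by
  have h₃ : 0 < S₃ := by linarith
  have h₁ : 0 < S₁ := by linarith
  have ha : 0 < S₃ ^ q := Real.rpow_pos_of_pos h₃ q
  have h49 : 1 < (4 / 9 : ℝ) ^ q :=
    Real.one_lt_rpow_of_pos_of_lt_one_of_neg (by norm_num) (by norm_num) hq
  have h₂q : (4 / 9) ^ q * S₃ ^ q ≤ S₂ ^ q := by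
    rw [← Real.mul_rpow (by norm_num) h₃.le]
    exact Real.rpow_le_rpow_of_nonpos h₂ (by linarith) hq.le
  have h₁q : S₁ ^ q ≤ (1 / 81) ^ q * S₃ ^ q := by
    rw [← Real.mul_rpow (by norm_num) h₃.le]
    exact Real.rpow_le_rpow_of_nonpos (by positivity) (by linarith) hq.le
  have h₃₁q : S₃ ^ q < S₁ ^ q := Real.rpow_lt_rpow_of_neg h₁ h₁₃ hq
  calc ((4 / 9) ^ q - 1) / ((1 / 81) ^ q - 1)
      = ((4 / 9) ^ q - 1) * S₃ ^ q / (((1 / 81) ^ q - 1) * S₃ ^ q) :=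
        (mul_div_mul_right _ _ ha.ne').symm
    _ ≤ (S₂ ^ q - S₃ ^ q) / (S₁ ^ q - S₃ ^ q) :=
        div_le_div₀ (by nlinarith) (by nlinarith) (by linarith) (by nlinarith)

/-- **Existence of a `γ`-lower barrier for rings** `G̃(y,3r) \ closure G̃(y,r)`. -/
theorem exists_ring_barrier (lam Lam : ℝ) (hlam : 0 < lam) (hLam : lam ≤ Lam) :
    ∃ γ > (0 : ℝ), ∀ y : ℝ × ℝ, ∀ r > (0 : ℝ), ∃ Φ : ℝ × ℝ → ℝ,
      ContDiffOn ℝ 2 Φ (Gtil y (3 * r) \ closure (Gtil y r)) ∧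
      ContinuousOn Φ (closure (Gtil y (3 * r) \ closure (Gtil y r))) ∧
      (∀ a11 a12 a22 : ℝ × ℝ → ℝ, IsElliptic lam Lam a11 a12 a22 →
        ∀ x ∈ Gtil y (3 * r) \ closure (Gtil y r), 0 ≤ Lop a11 a12 a22 Φ x) ∧
      (∀ x ∈ frontier (Gtil y (3 * r)), Φ x ≤ 0) ∧
      (∀ x ∈ frontier (Gtil y r), Φ x ≤ 1) ∧
      (∀ x ∈ frontier (Gtil y (2 * r)), γ ≤ Φ x) ∧
      (∀ x : ℝ × ℝ, Φ (-x.1, x.2) = Φ x) := by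
  set q : ℝ := -2 * Lam / lam with hq_def
  have hq : 4 * lam * q + 5 * Lam ≤ 4 * lam := by
    rw [hq_def]; field_simp; linarith
  have hq0 : q < 0 := div_neg_of_neg_of_pos (by linarith) hlam
  have h49 : 1 < (4 / 9 : ℝ) ^ q :=
    Real.one_lt_rpow_of_pos_of_lt_one_of_neg (by norm_num) (by norm_num) hq0
  have h81 : 1 < (1 / 81 : ℝ) ^ q :=
    Real.one_lt_rpow_of_pos_of_lt_one_of_neg (by norm_num) (by norm_num) hq0
  refine ⟨((4 / 9) ^ q - 1) / ((1 / 81) ^ q - 1), div_pos (by linarith) (by linarith),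
    fun y r hr => ?_⟩
  set S := gtilLevel |y.1|
  have hS13 : S r < S (3 * r) := gtilLevel_lt_three_mul hr
  have hD : 0 < S r ^ q - S (3 * r) ^ q :=
    sub_pos.2 (Real.rpow_lt_rpow_of_neg (gtilLevel_pos hr) hS13 hq0)
  have hpos : ∀ x ∈ closure (Gtil y (3 * r) \ closure (Gtil y r)), 0 < rho4 y x :=
    fun x hx => (gtilLevel_pos hr).trans_le (closure_Gtil_diff_subset hr hx)
  set Φ := fun z => (rho4 y z ^ q - S (3 * r) ^ q) / (S r ^ q - S (3 * r) ^ q)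
  have hΦ : ∀ x, 0 < rho4 y x → ContDiffAt ℝ 2 Φ x := fun x hx =>
    ((contDiff_rho4.contDiffAt.rpow_const_of_ne hx.ne').sub contDiffAt_const).div_const _
  refine ⟨Φ, fun x hx => (hΦ x (hpos x (subset_closure hx))).contDiffWithinAt,
    fun x hx => (hΦ x (hpos x hx)).continuousAt.continuousWithinAt,
    fun a11 a12 a22 hell x hx =>
      Lop_rpow_rho4_nonneg hell hlam hLam hq hD (hpos x (subset_closure hx)),
    fun x hx => ?_, fun x hx => ?_, fun x hx => ?_, fun x => ?_⟩
  · have hx' : rho4 y x = S (3 * r) := frontier_Gtil_subset (by positivity) hx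
    simp [Φ, hx']
  · have hx' : rho4 y x = S r := frontier_Gtil_subset hr hx
    simp [Φ, hx', hD.ne']
  · have hx' : rho4 y x = S (2 * r) := frontier_Gtil_subset (by positivity) hx
    simp only [Φ, hx']
    exact barrierConst_le hq0 (gtilLevel_pos (by positivity)) (gtilLevel_two_mul_le hr)
      (gtilLevel_three_mul_le hr) hS13
  · simp only [Φ, rho4_neg_fst]
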